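/- If d = 0, B ≥ 2, and M > C ≥ 1, then the puzzle (M, C, B, d) is solvable. -/
import Mathlib


/-- A state: (missionaries at first bank, cannibals at first bank, boat at first bank). -/
abbrev MCState := ℕ × ℕ × Bool

/-- A state is legal for parameters M, C, d. -/
def MCLegal (M C d : ℕ) (s : MCState) : Prop :=
  s.1 ≤ M ∧ s.2.1 ≤ C ∧
  (0 < s.1 ∧ 0 < s.2.1 → s.1 ≥ s.2.1 + d) ∧
  (0 < M - s.1 ∧ 0 < C - s.2.1 → M - s.1 ≥ (C - s.2.1) + d)

/-- A legal boat load of e1 missionaries and e2 cannibals. -/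
def MCLoad (B d e1 e2 : ℕ) : Prop :=
  1 ≤ e1 + e2 ∧ e1 + e2 ≤ B ∧ (0 < e1 ∧ 0 < e2 → e1 ≥ e2 + d)

/-- A move from state `s` to state `t` carrying e1 missionaries and e2 cannibals. -/
def MCMoveLoad (M C B d e1 e2 : ℕ) (s t : MCState) : Prop :=
  MCLegal M C d s ∧ MCLegal M C d t ∧ MCLoad B d e1 e2 ∧
  ((s.2.2 = true ∧ e1 ≤ s.1 ∧ e2 ≤ s.2.1 ∧
      t = (s.1 - e1, s.2.1 - e2, false)) ∨
   (s.2.2 = false ∧ s.1 + e1 ≤ M ∧ s.2.1 + e2 ≤ C ∧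
      t = (s.1 + e1, s.2.1 + e2, true)))

/-- A move from state `s` to state `t` with some legal load. -/
def MCMove (M C B d : ℕ) (s t : MCState) : Prop :=
  ∃ e1 e2, MCMoveLoad M C B d e1 e2 s t

/-- `s` is a solution of length `k` of the puzzle (M, C, B, d). -/
def MCSolution (M C B d k : ℕ) (s : Fin (k + 1) → MCState) : Prop :=
  s 0 = (M, C, true) ∧ s (Fin.last k) = (0, 0, false) ∧
  ∀ i : Fin k, MCMove M C B d (s i.castSucc) (s i.succ)

/-- The puzzle (M, C, B, d) is solvable. -/
def MCSolvable (M C B d : ℕ) : Prop :=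
  ∃ k, ∃ s : Fin (k + 1) → MCState, MCSolution M C B d k s

/-- The minimal length of a solution of the puzzle (M, C, B, d). -/
noncomputable def MCMinLength (M C B d : ℕ) : ℕ :=
  sInf {k | ∃ s : Fin (k + 1) → MCState, MCSolution M C B d k s}

/-- The number of solutions of minimal length of the puzzle (M, C, B, d). -/
noncomputable def MCNumMinSolutions (M C B d : ℕ) : ℕ :=
  Nat.card {s : Fin (MCMinLength M C B d + 1) → MCState //
    MCSolution M C B d (MCMinLength M C B d) s}

-- converter
lemma mc_reach_solvable (M C B d : ℕ)
    (h : Relation.ReflTransGen (MCMove M C B d) (M, C, true) (0, 0, false)) :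
    MCSolvable M C B d := by
  suffices H : ∀ a b : MCState, Relation.ReflTransGen (MCMove M C B d) a b →
      ∃ k, ∃ s : Fin (k+1) → MCState, s 0 = a ∧ s (Fin.last k) = b ∧
        ∀ i : Fin k, MCMove M C B d (s i.castSucc) (s i.succ) by
    obtain ⟨k, s, h1, h2, h3⟩ := H _ _ h
    exact ⟨k, s, h1, h2, h3⟩
  intro a b hab
  induction hab with
  | refl => exact ⟨0, fun _ => a, rfl, rfl, fun i => i.elim0⟩
  | @tail b c hab hbc ih =>
    obtain ⟨k, s, h1, h2, h3⟩ := ih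
    refine ⟨k+1, Fin.snoc s c, ?_, ?_, ?_⟩
    · have h0 : (0 : Fin (k+1+1)) = Fin.castSucc 0 := rfl
      rw [h0, Fin.snoc_castSucc]; exact h1
    · simp [Fin.snoc_last]
    · intro i
      induction i using Fin.lastCases with
      | last =>
        simp only [Fin.succ_last, Fin.snoc_last, Fin.snoc_castSucc, h2]
        exact hbc
      | cast j =>
        simp only [Fin.succ_castSucc, Fin.snoc_castSucc]
        exact h3 j

lemma mc_cross (M C B m c m' c' e1 e2 : ℕ) (hB : 2 ≤ B)
    (hm' : m' + e1 = m) (hc' : c' + e2 = c)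
    (hsum1 : 1 ≤ e1 + e2) (hsum2 : e1 + e2 ≤ 2)
    (hload : 0 < e1 → 0 < e2 → e2 ≤ e1)
    (hM : m ≤ M) (hC : c ≤ C)
    (hs1 : 0 < m → 0 < c → c ≤ m)
    (hs2 : m < M → c < C → C - c ≤ M - m)
    (ht1 : 0 < m' → 0 < c' → c' ≤ m')
    (ht2 : m' < M → c' < C → C - c' ≤ M - m') :
    MCMove M C B 0 (m, c, true) (m', c', false) := by
  refine ⟨e1, e2, ?_, ?_, ?_, Or.inl ⟨rfl, ?_, ?_, ?_⟩⟩
  · exact ⟨hM, hC, by simp; omega, by simp; omega⟩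
  · exact ⟨by show m' ≤ M; omega, by show c' ≤ C; omega, by simp; omega, by simp; omega⟩
  · exact ⟨hsum1, by omega, by omega⟩
  · show e1 ≤ m; omega
  · show e2 ≤ c; omega
  · show (m', c', false) = (m - e1, c - e2, false)
    have : m' = m - e1 := by omega
    have : c' = c - e2 := by omega
    simp_all

lemma mc_back (M C B m c m' c' e1 e2 : ℕ) (hB : 2 ≤ B)
    (hm' : m + e1 = m') (hc' : c + e2 = c')
    (hsum1 : 1 ≤ e1 + e2) (hsum2 : e1 + e2 ≤ 2)
    (hload : 0 < e1 → 0 < e2 → e2 ≤ e1)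
    (hM : m' ≤ M) (hC : c' ≤ C)
    (hs1 : 0 < m → 0 < c → c ≤ m)
    (hs2 : m < M → c < C → C - c ≤ M - m)
    (ht1 : 0 < m' → 0 < c' → c' ≤ m')
    (ht2 : m' < M → c' < C → C - c' ≤ M - m') :
    MCMove M C B 0 (m, c, false) (m', c', true) := by
  refine ⟨e1, e2, ?_, ?_, ?_, Or.inr ⟨rfl, ?_, ?_, ?_⟩⟩
  · exact ⟨by show m ≤ M; omega, by show c ≤ C; omega, by simp; omega, by simp; omega⟩
  · exact ⟨hM, hC, by simp; omega, by simp; omega⟩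
  · exact ⟨hsum1, by omega, by omega⟩
  · show m + e1 ≤ M; omega
  · show c + e2 ≤ C; omega
  · show (m', c', true) = (m + e1, c + e2, true)
    have : m' = m + e1 := by omega
    have : c' = c + e2 := by omega
    simp_all

section
variable (M C B : ℕ)

local notation "Reach" => Relation.ReflTransGen (MCMove M C B 0)

/-- Ferrying remaining missionaries, with all cannibals and at least one extra
missionary on the far bank. -/
lemma mc_ferry (hB : 2 ≤ B) (hC : 1 ≤ C) :
    ∀ m, m + C + 1 ≤ M → Reach (m, 0, false) (0, 0, false) := by
  intro m
  induction m with
  | zero => intro _; exact Relation.ReflTransGen.refl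
  | succ m ih =>
    intro h
    have s1 : MCMove M C B 0 (m+1, 0, false) (m+2, 0, true) :=
      mc_back M C B (m+1) 0 (m+2) 0 1 0 hB (by omega) (by omega) (by omega)
        (by omega) (by omega) (by omega) (by omega) (by omega) (by omega)
        (by omega) (by omega)
    have s2 : MCMove M C B 0 (m+2, 0, true) (m, 0, false) :=
      mc_cross M C B (m+2) 0 m 0 2 0 hB (by omega) (by omega) (by omega)
        (by omega) (by omega) (by omega) (by omega) (by omega) (by omega)
        (by omega) (by omega)
    exact (Relation.ReflTransGen.head s1 (Relation.ReflTransGen.head s2 (ih (by omega))))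

/-- Main loop: from (e+c, c, true) we can reach the goal, where e = M - C ≥ 1. -/
lemma mc_loop (hB : 2 ≤ B) (hC : 1 ≤ C) (f : ℕ) (hM : M = C + f + 1) :
    ∀ c, 1 ≤ c → c ≤ C → Reach (f + 1 + c, c, true) (0, 0, false) := by
  intro c
  induction c with
  | zero => omega
  | succ n ih =>
    intro _ hcC
    rcases Nat.eq_zero_or_pos n with hn | hn
    · -- endgame from (f+2, 1, true)
      subst hn
      have s1 : MCMove M C B 0 (f+2, 1, true) (f+1, 0, false) :=
        mc_cross M C B (f+2) 1 (f+1) 0 1 1 hB (by omega) (by omega) (by omega)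
          (by omega) (by omega) (by omega) (by omega) (by omega) (by omega)
          (by omega) (by omega)
      have s2 : MCMove M C B 0 (f+1, 0, false) (f+1, 1, true) :=
        mc_back M C B (f+1) 0 (f+1) 1 0 1 hB (by omega) (by omega) (by omega)
          (by omega) (by omega) (by omega) (by omega) (by omega) (by omega)
          (by omega) (by omega)
      have s3 : MCMove M C B 0 (f+1, 1, true) (f, 0, false) :=
        mc_cross M C B (f+1) 1 f 0 1 1 hB (by omega) (by omega) (by omega)
          (by omega) (by omega) (by omega) (by omega) (by omega) (by omega)
          (by omega) (by omega)
      have hfer := mc_ferry M C B hB hC f (by omega)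
      exact .head s1 (.head s2 (.head s3 hfer))
    · -- one round of the main loop: (f+n+2, n+1) → (f+n+1, n)
      have s1 : MCMove M C B 0 (f+1+(n+1), n+1, true) (f+n+1, n, false) :=
        mc_cross M C B (f+1+(n+1)) (n+1) (f+n+1) n 1 1 hB (by omega) (by omega)
          (by omega) (by omega) (by omega) (by omega) (by omega) (by omega)
          (by omega) (by omega) (by omega)
      have s2 : MCMove M C B 0 (f+n+1, n, false) (f+n+1, n+1, true) :=
        mc_back M C B (f+n+1) n (f+n+1) (n+1) 0 1 hB (by omega) (by omega)
          (by omega) (by omega) (by omega) (by omega) (by omega) (by omega)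
          (by omega) (by omega) (by omega)
      have s3 : MCMove M C B 0 (f+n+1, n+1, true) (f+n, n, false) :=
        mc_cross M C B (f+n+1) (n+1) (f+n) n 1 1 hB (by omega) (by omega)
          (by omega) (by omega) (by omega) (by omega) (by omega) (by omega)
          (by omega) (by omega) (by omega)
      have s4 : MCMove M C B 0 (f+n, n, false) (f+1+n, n, true) :=
        mc_back M C B (f+n) n (f+1+n) n 1 0 hB (by omega) (by omega)
          (by omega) (by omega) (by omega) (by omega) (by omega) (by omega)
          (by omega) (by omega) (by omega)
      exact .head s1 (.head s2 (.head s3 (.head s4 (ih hn (by omega)))))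

end


/-- If d = 0, B ≥ 2 and M > C ≥ 1 then the puzzle is solvable. -/
theorem stmt15 (M C B : ℕ) (hB : 2 ≤ B) (hMC : M > C) (hC : 1 ≤ C) :
    MCSolvable M C B 0 := by
  obtain ⟨f, hf⟩ : ∃ f, M = C + f + 1 := ⟨M - C - 1, by omega⟩
  have h := mc_loop M C B hB hC f hf C hC le_rfl
  have hstart : ((f + 1 + C : ℕ), C, true) = ((M : ℕ), C, true) := by
    simp [hf]; omega
  rw [hstart] at h
  exact mc_reach_solvable M C B 0 h
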